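/- arXiv:1604.05281 — 2 statements merged into one kernel-verified Lean document; each statement's English description precedes it below -/
import Mathlib

section
/- For any k,l ≥ 1 the subsets C_{k,l} and Φ_{k,l}C_{l,k} = {Φ_{k,l}∘τ : τ ∈ C_{l,k}} of the symmetric group S_{k+l} are disjoint. -/
/-- An `(s,t)`-shuffle `(α,β)` with `α(1) = 1`: a pair of strictly increasing maps
`α : {1,…,s} → {1,…,s+t}`, `β : {1,…,t} → {1,…,s+t}` with disjoint images and `α(1) = 1`
(everything 0-indexed, so the last condition reads `α 0 = 0`).  This is the set `Sh¹(s,t)`. -/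
structure Shuffle1 (s t : ℕ) where
  α : Fin s → Fin (s + t)
  β : Fin t → Fin (s + t)
  mono_alpha : StrictMono α
  mono_beta : StrictMono β
  disj : ∀ i j, α i ≠ β j
  first : ∀ hs : 0 < s, α ⟨0, hs⟩ = ⟨0, Nat.lt_of_lt_of_le hs (Nat.le_add_right s t)⟩

/-- The underlying function of the permutation `σ̃_{α,β,k,l} ∈ S_{k+l}`: it fixes `1,…,k` and
sends `k+1,…,k+i, k+i+1,…,k+l` to `k+β(i),…,k+β(1), k+α(1),…,k+α(l−i)` (here 0-indexed). -/
def sigmaTildeFun (k l i : ℕ) (hi : i < l) (sh : Shuffle1 (l - i) i) :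
    Fin (k + l) → Fin (k + l) := fun x =>
  if hx : (x : ℕ) < k then x
  else if hx2 : (x : ℕ) < k + i then
    have j := sh.β ⟨i - 1 - ((x : ℕ) - k), by omega⟩
    ⟨k + (j : ℕ), by have := j.isLt; omega⟩
  else
    have j := sh.α ⟨(x : ℕ) - k - i, by have := x.isLt; omega⟩
    ⟨k + (j : ℕ), by have := j.isLt; omega⟩

/-- The transposition `(1,2) ∈ Sₙ` (0-indexed: it swaps `0` and `1`), for `n ≥ 2`. -/
def swap01 (n : ℕ) : Equiv.Perm (Fin n) :=
  if h : 2 ≤ n then Equiv.swap ⟨0, by omega⟩ ⟨1, by omega⟩ else 1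

/-- The set `C_{k,l} = {σ_{α,β,k,l} = σ̃_{α,β,k,l} ∘ (1,2)^i : 0 ≤ i ≤ l−1, (α,β) ∈ Sh¹(l−i,i)}`
as a subset of `S_{k+l}`. -/
def Cset (k l : ℕ) : Set (Equiv.Perm (Fin (k + l))) :=
  { σ | ∃ (i : ℕ) (hi : i < l) (sh : Shuffle1 (l - i) i),
      ∀ x, σ x = sigmaTildeFun k l i hi sh ((swap01 (k + l) ^ i) x) }

/-- The permutation `Φ_{k,l} ∈ S_{k+l}` given by `Φ_{k,l}(i) = i+k` for `i ≤ l` and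
`Φ_{k,l}(i) = i−l` for `i > l` (here 0-indexed). -/
def Phi (k l : ℕ) : Equiv.Perm (Fin (k + l)) where
  toFun x := if _ : (x : ℕ) < l then ⟨(x : ℕ) + k, by omega⟩
             else ⟨(x : ℕ) - l, by have := x.isLt; omega⟩
  invFun x := if _ : (x : ℕ) < k then ⟨(x : ℕ) + l, by omega⟩
              else ⟨(x : ℕ) - k, by have := x.isLt; omega⟩
  left_inv x := by
    rcases x with ⟨x, hx⟩
    dsimp only
    split_ifs <;> rename_i h1 h2 <;>
      simp only [Fin.val_mk, Fin.mk.injEq] at h2 ⊢ <;> omega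
  right_inv x := by
    rcases x with ⟨x, hx⟩
    dsimp only
    split_ifs <;> rename_i h1 h2 <;>
      simp only [Fin.val_mk, Fin.mk.injEq] at h2 ⊢ <;> omega

/-- The set `Φ_{k,l} C_{l,k} = {Φ_{k,l} ∘ τ : τ ∈ C_{l,k}} ⊆ S_{k+l}`, where `C_{l,k} ⊆ S_{l+k}`
is identified with a subset of `S_{k+l}` via the canonical relabelling `Fin (l+k) ≃ Fin (k+l)`. -/
def PhiCset (k l : ℕ) : Set (Equiv.Perm (Fin (k + l))) :=
  (fun τ => Phi k l * (finCongr (Nat.add_comm l k)).permCongr τ) '' Cset l k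

/-- The set `T_{k,l} = C_{k,l} ∪ Φ_{k,l} C_{l,k} ⊆ S_{k+l}`. -/
def Tset (k l : ℕ) : Set (Equiv.Perm (Fin (k + l))) := Cset k l ∪ PhiCset k l

/-!
An element `σ = σ̃ ∘ (1,2)^i` of `C_{k,l}` sends `(1,2)^i(1)` to `1`, because `σ̃` fixes
`1,…,k`; and `(1,2)^i(1)` is `1`, or `2` when `i` is odd, so it is at most `l` as `i < l`.
For `Φ_{k,l} τ` with `τ = σ̃' ∘ (1,2)^j ∈ C_{l,k}`, the only preimage of `1` under `Φ_{k,l}` is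
`l + 1`; since `α(1) = 1` and the images of `α` and `β` are disjoint, the only preimage of
`l + 1` under `σ̃'` is `l + j + 1`, which `(1,2)^j` fixes. Hence `(Φ_{k,l} τ)⁻¹(1) > l`.
-/

namespace Shuffle1

variable {s t : ℕ} (sh : Shuffle1 s t)

theorem val_alpha_eq_zero_iff (a : Fin s) : (sh.α a : ℕ) = 0 ↔ (a : ℕ) = 0 := by
  have hs : 0 < s := a.pos
  constructor
  · intro h
    refine congrArg Fin.val (sh.mono_alpha.injective (?_ : sh.α a = sh.α ⟨0, hs⟩))
    rw [sh.first hs]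
    exact Fin.ext h
  · intro h
    obtain rfl : a = ⟨0, hs⟩ := Fin.ext h
    rw [sh.first hs]

theorem val_beta_ne_zero (hs : 0 < s) (b : Fin t) : (sh.β b : ℕ) ≠ 0 := fun h =>
  sh.disj ⟨0, hs⟩ b (by rw [sh.first hs]; exact Fin.ext h.symm)

end Shuffle1

section swap01

theorem swap01_pow_two (n : ℕ) : swap01 n ^ 2 = 1 := by
  unfold swap01
  split_ifs
  · exact Equiv.swap_mul_self _ _
  · exact one_pow 2

theorem swap01_pow_involutive (n i : ℕ) : Function.Involutive (swap01 n ^ i) := fun x => by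
  rw [← Equiv.Perm.mul_apply, ← sq, pow_right_comm, swap01_pow_two, one_pow,
    Equiv.Perm.one_apply]

theorem swap01_pow_apply_of_two_le (n i : ℕ) {x : Fin n} (hx : 2 ≤ (x : ℕ)) :
    (swap01 n ^ i) x = x := by
  refine Equiv.Perm.pow_apply_eq_self_of_apply_eq_self ?_ i
  unfold swap01
  rw [dif_pos (by omega)]
  exact Equiv.swap_apply_of_ne_of_ne (by grind) (by grind)

theorem val_swap01_pow_apply_zero {n : ℕ} (hn : 2 ≤ n) (i : ℕ) :
    ((swap01 n ^ i) ⟨0, by omega⟩ : ℕ) = i % 2 := by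
  rw [pow_eq_pow_mod i (swap01_pow_two n)]
  rcases Nat.mod_two_eq_zero_or_one i with h | h <;> rw [h]
  · rfl
  · simp [swap01, hn]

end swap01

section sigmaTildeFun

variable {k l i : ℕ} {hi : i < l} {sh : Shuffle1 (l - i) i}

theorem sigmaTildeFun_of_lt {x : Fin (k + l)} (hx : (x : ℕ) < k) :
    sigmaTildeFun k l i hi sh x = x := by
  simp [sigmaTildeFun, hx]

theorem val_eq_add_of_val_sigmaTildeFun_eq {x : Fin (k + l)}
    (h : (sigmaTildeFun k l i hi sh x : ℕ) = k) : (x : ℕ) = k + i := by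
  unfold sigmaTildeFun at h
  split_ifs at h with h₁ h₂
  · omega
  · dsimp only at h
    exact absurd (by omega) (sh.val_beta_ne_zero (by omega) ⟨i - 1 - (x - k), by omega⟩)
  · dsimp only at h
    have := (sh.val_alpha_eq_zero_iff ⟨x - k - i, by omega⟩).mp (by omega)
    dsimp only at this
    omega

end sigmaTildeFun

theorem val_Phi_eq_zero_iff {k l : ℕ} (hk : 0 < k) (y : Fin (k + l)) :
    (Phi k l y : ℕ) = 0 ↔ (y : ℕ) = l := by
  simp only [Phi, Equiv.coe_fn_mk]
  split_ifs <;> simp only <;> omega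

theorem pos_of_mem_Cset {k l : ℕ} {σ : Equiv.Perm (Fin (k + l))} (hσ : σ ∈ Cset k l) :
    0 < l := by
  obtain ⟨i, hi, -⟩ := hσ
  omega

theorem exists_lt_apply_eq_zero_of_mem_Cset {k l : ℕ} (hk : 0 < k)
    {σ : Equiv.Perm (Fin (k + l))} (hσ : σ ∈ Cset k l) :
    ∃ x : Fin (k + l), (x : ℕ) < l ∧ (σ x : ℕ) = 0 := by
  obtain ⟨i, hi, sh, hσ⟩ := hσ
  refine ⟨(swap01 (k + l) ^ i) ⟨0, by omega⟩, ?_, ?_⟩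
  · rw [val_swap01_pow_apply_zero (by omega)]
    omega
  · rw [hσ, swap01_pow_involutive, sigmaTildeFun_of_lt hk]

theorem le_of_mem_PhiCset_of_apply_eq_zero {k l : ℕ} {σ : Equiv.Perm (Fin (k + l))}
    (hσ : σ ∈ PhiCset k l) {x : Fin (k + l)} (hx : (σ x : ℕ) = 0) : l ≤ (x : ℕ) := by
  obtain ⟨τ, ⟨j, hj, sh, hτ⟩, rfl⟩ := hσ
  have hτx : (τ (Fin.cast (Nat.add_comm k l) x) : ℕ) = l := by
    simpa [val_Phi_eq_zero_iff (by omega : 0 < k)] using hx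
  generalize hy : Fin.cast (Nat.add_comm k l) x = y at hτx
  have hxy : (x : ℕ) = y := by rw [← hy, Fin.val_cast]
  rw [hτ] at hτx
  have hgy := val_eq_add_of_val_sigmaTildeFun_eq hτx
  rcases Nat.lt_or_ge (l + j) 2 with hlj | hlj
  · obtain rfl | rfl : l = 0 ∨ j = 0 := by omega
    · exact Nat.zero_le _
    · rw [pow_zero, Equiv.Perm.one_apply] at hgy
      omega
  · rw [← swap01_pow_involutive (l + k) j y, swap01_pow_apply_of_two_le _ _ (hgy ▸ hlj)] at hxy
    omega

theorem Cset_disjoint_PhiCset_general (k l : ℕ) :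
    Cset k l ∩ PhiCset k l = ∅ := by
  refine Set.eq_empty_of_forall_notMem fun σ ⟨hC, hΦ⟩ => ?_
  obtain ⟨τ, hτ, rfl⟩ := id hΦ
  obtain ⟨x, hxl, hx⟩ := exists_lt_apply_eq_zero_of_mem_Cset (pos_of_mem_Cset hτ) hC
  exact hxl.not_ge (le_of_mem_PhiCset_of_apply_eq_zero hΦ hx)

/-- For `k, l ≥ 1` the subsets `C_{k,l}` and `Φ_{k,l}C_{l,k}` of `S_{k+l}` are disjoint. -/
theorem Cset_disjoint_PhiCset (k l : ℕ) (hk : 1 ≤ k) (hl : 1 ≤ l) :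
    Cset k l ∩ PhiCset k l = ∅ :=
  Cset_disjoint_PhiCset_general k l
end

section
/- For n ≥ 2, the number of 2-Jacobi subsets of S_n equals 2^{(n−1)!·(n−1)}. -/
/-!
A subset `T ⊆ Sₙ` is 2-Jacobi iff its indicator lies in the kernel of the `𝔽₂`-linear map
`Φ : 𝔽₂^{Sₙ} → FreeLie(x₀, …, x_{n-1})`, `σ ↦ [x_{σ0}, …, x_{σ(n-1)}]`, since the free Lie algebra
is the universal test case. Antisymmetry and the Jacobi identity rewrite every such word as a
combination of words beginning with `x₀`, and these `(n-1)!` words are linearly independent: on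
formal combinations of words, let `x_j` prepend the letter `j` but kill every word containing `0`;
then each letter kills the image of `x₀`, so `[x₀, x_{τ1}, …]` sends the empty word to the word
`0 τ1 …`. Hence `Φ` has rank `(n-1)!`, its kernel has dimension `n! - (n-1)! = (n-1)! (n-1)`, and
it has `2^{(n-1)!(n-1)}` elements.
-/

/-- The left-normed Lie bracket `[a₁,…,aₘ]` of a list of elements of a Lie ring,
defined by `[a₁] = a₁` and `[a₁,…,aₘ] = [[a₁,…,a_{m-1}], aₘ]` (and `0` for the empty list). -/
def lieWord {L : Type*} [LieRing L] : List L → L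
  | [] => 0
  | x :: xs => xs.foldl (fun a b => ⁅a, b⁆) x

/-- A subset `T ⊆ Sₙ` is 2-Jacobi if `∑_{σ ∈ T} [a_{σ(1)},…,a_{σ(n)}] = 0` for all elements
`a₁,…,aₙ` of any Lie algebra over the field `ℤ/2`. -/
def Is2Jacobi {n : ℕ} (T : Set (Equiv.Perm (Fin n))) : Prop :=
  ∀ (L : Type) [LieRing L] [Module (ZMod 2) L] [LieAlgebra (ZMod 2) L], ∀ a : Fin n → L,
    ∑ᶠ σ ∈ T, lieWord (List.ofFn fun i => a (σ i)) = 0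

open Equiv Module

section LieWord

variable {R L : Type*} [CommRing R] [LieRing L] [LieAlgebra R L]

lemma lieWord_append_singleton {l : List L} (hl : l ≠ []) (c : L) :
    lieWord (l ++ [c]) = ⁅lieWord l, c⁆ := by
  obtain ⟨x, xs, rfl⟩ := List.exists_cons_of_ne_nil hl
  simp [lieWord, List.foldl_append]

lemma LieHom.map_lieWord {L' : Type*} [LieRing L'] [LieAlgebra R L'] (f : L →ₗ⁅R⁆ L')
    (l : List L) : f (lieWord l) = lieWord (l.map f) := by
  induction l using List.reverseRecOn with
  | nil => simp [lieWord]
  | append_singleton l c ih =>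
    rcases eq_or_ne l [] with rfl | hl
    · rfl
    · rw [List.map_append, List.map_singleton, lieWord_append_singleton hl,
        lieWord_append_singleton (by simpa using hl), LieHom.map_lie, ih]

end LieWord

section WordSpan

variable (R : Type*) {L α : Type*} [CommRing R] [LieRing L] [LieAlgebra R L] (f : α → L)

def wordSpan (xs ys : List α) : Submodule R L :=
  Submodule.span R {x | ∃ w, w.Perm ys ∧ x = lieWord ((xs ++ w).map f)}

variable {R f}

lemma lieWord_map_append_singleton {l : List α} (hl : l ≠ []) (c : α) :
    lieWord ((l ++ [c]).map f) = ⁅lieWord (l.map f), f c⁆ := by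
  rw [List.map_append, List.map_singleton, lieWord_append_singleton (by simpa using hl)]

lemma wordSpan_append_le (xs zs ys : List α) :
    wordSpan R f (xs ++ zs) ys ≤ wordSpan R f xs (ys ++ zs) := by
  refine Submodule.span_mono ?_
  rintro _ ⟨w, hw, rfl⟩
  exact ⟨zs ++ w, (hw.append_left zs).trans List.perm_append_comm, by rw [List.append_assoc]⟩

lemma lie_mem_wordSpan {xs ys : List α} (hxs : xs ≠ []) {y : L} (hy : y ∈ wordSpan R f xs ys)
    (c : α) : ⁅y, f c⁆ ∈ wordSpan R f xs (ys ++ [c]) := by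
  induction hy using Submodule.span_induction with
  | mem x hx =>
    obtain ⟨w, hw, rfl⟩ := hx
    refine Submodule.subset_span ⟨w ++ [c], hw.append_right [c], ?_⟩
    rw [← List.append_assoc, lieWord_map_append_singleton (by simp [hxs])]
  | zero => simp
  | add x y _ _ hx hy => rw [add_lie]; exact add_mem hx hy
  | smul r x _ hx => rw [smul_lie]; exact Submodule.smul_mem _ r hx

lemma lie_lieWord_mem_wordSpan (ys : List α) {xs : List α} (hxs : xs ≠ []) :
    ⁅lieWord (xs.map f), lieWord (ys.map f)⁆ ∈ wordSpan R f xs ys := by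
  induction ys using List.reverseRecOn generalizing xs with
  | nil => simp [lieWord]
  | append_singleton ys c ih =>
    rcases eq_or_ne ys [] with rfl | hys
    · exact Submodule.subset_span
        ⟨[c], List.Perm.refl _, (lieWord_map_append_singleton hxs c).symm⟩
    · rw [lieWord_map_append_singleton hys, leibniz_lie, ← lie_skew (lieWord (ys.map f)),
        ← lieWord_map_append_singleton hxs]
      exact add_mem (lie_mem_wordSpan hxs (ih hxs) c)
        (neg_mem (wordSpan_append_le xs [c] ys (ih (by simp))))

lemma lieWord_mem_wordSpan_cons (a : α) (p s : List α) :
    lieWord ((p ++ a :: s).map f) ∈ wordSpan R f [a] (p ++ s) := by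
  induction s using List.reverseRecOn with
  | nil =>
    rcases eq_or_ne p [] with rfl | hp
    · exact Submodule.subset_span ⟨[], List.Perm.refl _, rfl⟩
    · rw [lieWord_map_append_singleton hp, ← lie_skew, List.append_nil]
      exact neg_mem (lie_lieWord_mem_wordSpan p (xs := [a]) (by simp))
  | append_singleton s c ih =>
    rw [show p ++ a :: (s ++ [c]) = p ++ a :: s ++ [c] by simp,
      lieWord_map_append_singleton (by simp), ← List.append_assoc]
    exact lie_mem_wordSpan (by simp) ih c

end WordSpan

section PermLieWord

variable (R : Type*) [CommRing R] {n m : ℕ}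

noncomputable def permLieWord (σ : Perm (Fin n)) : FreeLieAlgebra R (Fin n) :=
  lieWord (List.ofFn fun i => FreeLieAlgebra.of R (σ i))

variable {R}

lemma permLieWord_eq_lieWord_map (σ : Perm (Fin n)) :
    permLieWord R σ = lieWord ((List.ofFn σ).map (FreeLieAlgebra.of R)) := by
  rw [permLieWord, List.map_ofFn]; rfl

lemma lift_permLieWord {L : Type*} [LieRing L] [LieAlgebra R L] (a : Fin n → L)
    (σ : Perm (Fin n)) :
    FreeLieAlgebra.lift R a (permLieWord R σ) = lieWord (List.ofFn fun i => a (σ i)) := by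
  rw [permLieWord, LieHom.map_lieWord, List.map_ofFn]
  simp only [Function.comp_def, FreeLieAlgebra.lift_of_apply]

lemma exists_ofFn_eq {l : List (Fin n)} (hl : l.Nodup) (hlen : l.length = n) :
    ∃ π : Perm (Fin n), List.ofFn π = l := by
  have hinj : Function.Injective fun i : Fin n => l.get (i.cast hlen.symm) :=
    fun i j h => Fin.cast_injective _ (hl.injective_get h)
  refine ⟨Equiv.ofBijective _ hinj.bijective_of_finite, List.ext_get (by simp [hlen]) ?_⟩
  intro k _ _
  simp

lemma permLieWord_mem_span_fixing_zero (σ : Perm (Fin (m + 1))) :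
    permLieWord R σ ∈ Submodule.span R (permLieWord R '' {π | π 0 = 0}) := by
  obtain ⟨p, s, hps⟩ := List.append_of_mem
    (List.mem_ofFn.2 ⟨σ.symm 0, σ.apply_symm_apply 0⟩ : (0 : Fin (m + 1)) ∈ List.ofFn σ)
  have hspan := lieWord_mem_wordSpan_cons (R := R) (f := FreeLieAlgebra.of R) 0 p s
  rw [← hps, ← permLieWord_eq_lieWord_map] at hspan
  refine Submodule.span_le.2 ?_ hspan
  rintro _ ⟨w, hw, rfl⟩
  have hperm : (0 :: w).Perm (List.ofFn σ) := hps ▸ (hw.cons 0).trans List.perm_middle.symm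
  obtain ⟨π, hπ⟩ := exists_ofFn_eq (hperm.nodup_iff.2 (List.nodup_ofFn.2 σ.injective))
    (hperm.length_eq.trans (List.length_ofFn ..))
  refine Submodule.subset_span ⟨π, ?_, by rw [permLieWord_eq_lieWord_map, hπ]; rfl⟩
  rw [List.ofFn_succ] at hπ
  exact (List.cons.inj hπ).1

lemma range_decomposeFin_symm_zero :
    Set.range (fun τ : Perm (Fin m) => Perm.decomposeFin.symm (0, τ)) = {π | π 0 = 0} := by
  ext π
  refine ⟨?_, fun hπ => ?_⟩
  · rintro ⟨τ, rfl⟩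
    exact Perm.decomposeFin_symm_apply_zero 0 τ
  · obtain ⟨⟨p, τ⟩, rfl⟩ := Perm.decomposeFin.symm.surjective π
    rw [Set.mem_ofPred_eq, Perm.decomposeFin_symm_apply_zero] at hπ
    exact ⟨τ, by rw [hπ]⟩

lemma span_range_permLieWord :
    Submodule.span R (Set.range (permLieWord R : Perm (Fin (m + 1)) → _)) =
      Submodule.span R (Set.range fun τ : Perm (Fin m) =>
        permLieWord R (Perm.decomposeFin.symm (0, τ))) := by
  have himage : Set.range (fun τ : Perm (Fin m) => permLieWord R (Perm.decomposeFin.symm (0, τ)))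
      = permLieWord R '' {π | π 0 = 0} := by
    rw [← range_decomposeFin_symm_zero, ← Set.range_comp]; rfl
  refine le_antisymm ?_ (Submodule.span_mono (Set.range_comp_subset_range _ (permLieWord R)))
  rw [Submodule.span_le, himage]
  rintro _ ⟨σ, rfl⟩
  exact permLieWord_mem_span_fixing_zero σ

end PermLieWord

section WordRepresentation

attribute [local instance] LieRing.ofAssociativeRing

lemma lieWord_cons_eq_mul_prod {A : Type*} [Ring A] {a : A} {l : List A}
    (hl : ∀ b ∈ l, b * a = 0) : lieWord (a :: l) = a * l.prod := by
  induction l using List.reverseRecOn with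
  | nil => simp [lieWord]
  | append_singleton l c ih =>
    have hc : c * a = 0 := hl c (by simp)
    rw [← List.cons_append, lieWord_append_singleton (List.cons_ne_nil a l),
      ih fun b hb => hl b (by simp [hb]), Ring.lie_def, List.prod_append, List.prod_singleton,
      ← mul_assoc c, hc, zero_mul, sub_zero, mul_assoc]

variable (R : Type*) [CommRing R] {α : Type*} [DecidableEq α]

noncomputable def prependUnlessMem (i j : α) : Module.End R (List α →₀ R) :=
  Finsupp.linearCombination R fun w => if i ∈ w then 0 else Finsupp.single (j :: w) 1

variable {R}

lemma prependUnlessMem_single (i j : α) (w : List α) :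
    prependUnlessMem R i j (Finsupp.single w 1) =
      if i ∈ w then 0 else Finsupp.single (j :: w) 1 := by
  simp [prependUnlessMem]

lemma prependUnlessMem_mul_prependUnlessMem_self (i j : α) :
    prependUnlessMem R i j * prependUnlessMem R i i = 0 := by
  ext w : 2
  simp only [LinearMap.coe_comp, Function.comp_apply, Finsupp.lsingle_apply, Module.End.mul_apply,
    prependUnlessMem_single, LinearMap.zero_apply]
  split_ifs <;> simp [prependUnlessMem_single]

lemma prod_prependUnlessMem_single_nil {i : α} {l : List α} (hl : i ∉ l) :
    (l.map (prependUnlessMem R i)).prod (Finsupp.single [] 1) = Finsupp.single l 1 := by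
  induction l with
  | nil => rfl
  | cons j l ih =>
    have hl' : i ∉ l := fun h => hl (List.mem_cons_of_mem j h)
    rw [List.map_cons, List.prod_cons, Module.End.mul_apply, ih hl', prependUnlessMem_single,
      if_neg hl']

lemma lift_prependUnlessMem_lieWord {i : α} {l : List α} (hl : i ∉ l) :
    FreeLieAlgebra.lift R (prependUnlessMem R i) (lieWord ((i :: l).map (FreeLieAlgebra.of R)))
      (Finsupp.single [] 1) = Finsupp.single (i :: l) 1 := by
  have hρ : ⇑(FreeLieAlgebra.lift R (prependUnlessMem R i)) ∘ FreeLieAlgebra.of R =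
      prependUnlessMem R i := funext (FreeLieAlgebra.lift_of_apply _)
  rw [LieHom.map_lieWord, List.map_map, hρ, List.map_cons,
    lieWord_cons_eq_mul_prod fun b hb => ?_, Module.End.mul_apply,
    prod_prependUnlessMem_single_nil hl, prependUnlessMem_single, if_neg hl]
  obtain ⟨j, -, rfl⟩ := List.mem_map.1 hb
  exact prependUnlessMem_mul_prependUnlessMem_self i j

lemma lift_prependUnlessMem_permLieWord {m : ℕ} {π : Perm (Fin (m + 1))} (hπ : π 0 = 0) :
    FreeLieAlgebra.lift R (prependUnlessMem R 0) (permLieWord R π) (Finsupp.single [] 1) =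
      Finsupp.single (List.ofFn π) 1 := by
  rw [permLieWord_eq_lieWord_map, List.ofFn_succ, hπ]
  refine lift_prependUnlessMem_lieWord fun h => ?_
  obtain ⟨i, hi⟩ := List.mem_ofFn.1 h
  exact i.succ_ne_zero (π.injective (hi.trans hπ.symm))

lemma linearIndependent_permLieWord_decomposeFin [Nontrivial R] {m : ℕ} :
    LinearIndependent R fun τ : Perm (Fin m) => permLieWord R (Perm.decomposeFin.symm (0, τ)) := by
  let E := LinearMap.applyₗ (R := R) (Finsupp.single [] 1) ∘ₗ
    (FreeLieAlgebra.lift R (prependUnlessMem R (0 : Fin (m + 1)))).toLinearMap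
  refine LinearIndependent.of_comp E ?_
  have hE : E ∘ (fun τ : Perm (Fin m) => permLieWord R (Perm.decomposeFin.symm (0, τ))) =
      (fun l => Finsupp.single l 1) ∘ fun τ => List.ofFn (Perm.decomposeFin.symm (0, τ)) :=
    funext fun τ => lift_prependUnlessMem_permLieWord (Perm.decomposeFin_symm_apply_zero 0 τ)
  rw [hE]
  exact (Finsupp.linearIndependent_single_one R _).comp _ <| List.ofFn_injective.comp <|
    DFunLike.coe_injective.comp <|
      Perm.decomposeFin.symm.injective.comp (Prod.mk_right_injective 0)

end WordRepresentation

lemma finrank_span_range_permLieWord (K : Type*) [Field K] (m : ℕ) :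
    finrank K (Submodule.span K (Set.range (permLieWord K : Perm (Fin (m + 1)) → _))) =
      m.factorial := by
  rw [span_range_permLieWord, finrank_span_eq_card linearIndependent_permLieWord_decomposeFin,
    Fintype.card_perm, Fintype.card_fin]

lemma Fintype.linearCombination_indicator_one {R ι M : Type*} [Semiring R] [Fintype ι]
    [AddCommMonoid M] [Module R M] (v : ι → M) (s : Set ι) :
    Fintype.linearCombination R v (s.indicator 1) = ∑ᶠ i ∈ s, v i := by
  rw [Fintype.linearCombination_apply, finsum_mem_def, finsum_eq_sum_of_fintype]
  refine Finset.sum_congr rfl fun i _ => ?_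
  by_cases hi : i ∈ s <;> simp [hi]

lemma bijective_indicator_one_zmod_two (α : Type*) :
    Function.Bijective fun s : Set α => s.indicator (1 : α → ZMod 2) := by
  refine ⟨fun s t h => Set.indicator_one_inj (ZMod 2) h, fun v => ⟨{a | v a = 1}, ?_⟩⟩
  funext a
  rcases (by decide : ∀ x : ZMod 2, x = 0 ∨ x = 1) (v a) with h | h <;> simp [h]

lemma is2Jacobi_iff_indicator_mem_ker {n : ℕ} (T : Set (Perm (Fin n))) :
    Is2Jacobi T ↔
      T.indicator 1 ∈
        LinearMap.ker (Fintype.linearCombination (ZMod 2) (permLieWord (ZMod 2))) := by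
  rw [LinearMap.mem_ker, Fintype.linearCombination_indicator_one]
  refine ⟨fun hT => hT _ (FreeLieAlgebra.of (ZMod 2)), fun h L _ _ _ a => ?_⟩
  simp_rw [← lift_permLieWord (R := ZMod 2) a]
  have hmap := (FreeLieAlgebra.lift (ZMod 2) a).toLinearMap.toAddMonoidHom.map_finsum_mem
    (permLieWord (ZMod 2)) T.toFinite
  simpa [h] using hmap.symm

/-- For `n ≥ 2`, the number of 2-Jacobi subsets of `Sₙ` equals `2^{(n−1)!·(n−1)}`. -/
theorem card_is2Jacobi (n : ℕ) (hn : 2 ≤ n) :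
    Nat.card {T : Set (Equiv.Perm (Fin n)) // Is2Jacobi T} =
      2 ^ ((n - 1).factorial * (n - 1)) := by
  obtain ⟨m, rfl⟩ : ∃ m, n = m + 1 := ⟨n - 1, by omega⟩
  rw [Nat.add_sub_cancel]
  set Φ := Fintype.linearCombination (ZMod 2) (permLieWord (ZMod 2) : Perm (Fin (m + 1)) → _)
  have hker : finrank (ZMod 2) (LinearMap.ker Φ) = m.factorial * m := by
    have h := Φ.finrank_range_add_finrank_ker
    rw [Fintype.range_linearCombination, finrank_span_range_permLieWord,
      finrank_fintype_fun_eq_card, Fintype.card_perm, Fintype.card_fin, Nat.factorial_succ] at h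
    linarith
  calc Nat.card {T : Set (Perm (Fin (m + 1))) // Is2Jacobi T}
      = Nat.card (LinearMap.ker Φ) := Nat.card_congr <|
        (Equiv.ofBijective _ (bijective_indicator_one_zmod_two _)).subtypeEquiv
          is2Jacobi_iff_indicator_mem_ker
    _ = 2 ^ (m.factorial * m) := by
      rw [natCard_eq_pow_finrank (K := ZMod 2), Nat.card_zmod, hker]
end
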